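/- There is a bijection between the set A_k of standard type B partitions of ⟨n⟩ with 2k+1 blocks and the set Z_k of ordered type B partitions of ⟨n⟩ with 2k+1 blocks satisfying lob_{B'}(π) = 0; explicitly, the bijection swaps blocks S_{2ℓ} and S_{2ℓ-1} for each 1 ≤ ℓ ≤ k. -/

import Mathlib

open Finset Polynomial

/-- The ground set ⟨n⟩ = {-n, ..., -1, 0, 1, ..., n}. -/
noncomputable def angleB (n : ℕ) : Finset ℤ := Finset.Icc (-(n : ℤ)) (n : ℤ)

/-- An ordered type B (signed) partition of ⟨n⟩ with 2k+1 blocks: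
pairwise disjoint nonempty blocks covering ⟨n⟩, with 0 ∈ S₀, S₀ closed under
negation, and S_{2i} = -S_{2i-1} for i ≥ 1. -/
def IsOrderedB (n k : ℕ) (S : Fin (2*k+1) → Finset ℤ) : Prop :=
  (∀ i, (S i).Nonempty) ∧
  (∀ i j, i ≠ j → Disjoint (S i) (S j)) ∧
  (Finset.univ.biUnion S = angleB n) ∧
  ((0 : ℤ) ∈ S 0) ∧
  (∀ x ∈ S 0, -x ∈ S 0) ∧
  (∀ i : ℕ, 1 ≤ i → ∀ h : 2*i < 2*k+1,
    S ⟨2*i, h⟩ = (S ⟨2*i-1, by omega⟩).image (fun x => -x))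

/-- m_j = min |S_j| (0 if the block is empty). -/
def mB {m : ℕ} (S : Fin m → Finset ℤ) (j : Fin m) : ℤ :=
  WithTop.untopD 0 (((S j).image (fun x => |x|)).min)

/-- M_j = max |S_j| (0 if the block is empty). -/
def MB {m : ℕ} (S : Fin m → Finset ℤ) (j : Fin m) : ℤ :=
  WithBot.unbotD 0 (((S j).image (fun x => |x|)).max)

/-- A standard type B partition: ordered, with m_{2i} ∈ S_{2i} for i ≥ 1 and
0 = m₀ < m₂ < m₄ < ... < m_{2k}. -/
def IsStandardB (n k : ℕ) (S : Fin (2*k+1) → Finset ℤ) : Prop :=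
  IsOrderedB n k S ∧
  (∀ i : ℕ, 1 ≤ i → ∀ h : 2*i < 2*k+1, mB S ⟨2*i, h⟩ ∈ S ⟨2*i, h⟩) ∧
  (∀ i : ℕ, ∀ h : 2*(i+1) < 2*k+1, mB S ⟨2*i, by omega⟩ < mB S ⟨2*(i+1), h⟩)

/-- inv ρ: number of pairs (s, S_j) with s ∈ S_i for some i < j and s ≥ m_j. -/
noncomputable def invB {m : ℕ} (S : Fin m → Finset ℤ) : ℕ :=
  {p : ℤ × Fin m | (∃ i < p.2, p.1 ∈ S i) ∧ mB S p.2 ≤ p.1}.ncard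

/-- ros_B = inv. -/
noncomputable def rosB {m : ℕ} (S : Fin m → Finset ℤ) : ℕ := invB S

/-- los_{B'}: pairs (s, S_j) with s ∈ S_i for some i > j and s ≥ m_j. -/
noncomputable def losB' {m : ℕ} (S : Fin m → Finset ℤ) : ℕ :=
  {p : ℤ × Fin m | (∃ i, p.2 < i ∧ p.1 ∈ S i) ∧ mB S p.2 ≤ p.1}.ncard

/-- lob_{B'}: pairs (s, S_j) with s ∈ S_i for some i > j and 0 < s ≤ m_j. -/
noncomputable def lobB' {m : ℕ} (S : Fin m → Finset ℤ) : ℕ :=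
  {p : ℤ × Fin m | (∃ i, p.2 < i ∧ p.1 ∈ S i) ∧ 0 < p.1 ∧ p.1 ≤ mB S p.2}.ncard

/-- rcb_B: pairs (s, S_j) with s ∈ S_i for some i < j and 0 < s ≤ M_j. -/
noncomputable def rcbB {m : ℕ} (S : Fin m → Finset ℤ) : ℕ :=
  {p : ℤ × Fin m | (∃ i < p.2, p.1 ∈ S i) ∧ 0 < p.1 ∧ p.1 ≤ MB S p.2}.ncard

/-- rob_B: pairs (s, S_j) with s ∈ S_i for some i < j and 0 < s ≤ m_j. -/
noncomputable def robB {m : ℕ} (S : Fin m → Finset ℤ) : ℕ :=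
  {p : ℤ × Fin m | (∃ i < p.2, p.1 ∈ S i) ∧ 0 < p.1 ∧ p.1 ≤ mB S p.2}.ncard

/-- rcs_B: pairs (s, S_j) with s ∈ S_i for some i < j and s ≥ M_j. -/
noncomputable def rcsB {m : ℕ} (S : Fin m → Finset ℤ) : ℕ :=
  {p : ℤ × Fin m | (∃ i < p.2, p.1 ∈ S i) ∧ MB S p.2 ≤ p.1}.ncard

/-- Type B Stirling numbers of the second kind. -/
def StirB : ℕ → ℕ → ℕ
  | 0, 0 => 1
  | 0, _+1 => 0
  | n+1, 0 => StirB n 0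
  | n+1, k+1 => StirB n k + (2*(k+1)+1) * StirB n (k+1)

/-- [m] = 1 + q + ... + q^{m-1}. -/
noncomputable def qb (m : ℕ) : Polynomial ℤ := ∑ i ∈ Finset.range m, (Polynomial.X : Polynomial ℤ) ^ i

/-- Type B q-Stirling numbers of the second kind. -/
noncomputable def qStirB : ℕ → ℕ → Polynomial ℤ
  | 0, 0 => 1
  | 0, _+1 => 0
  | n+1, 0 => qStirB n 0
  | n+1, k+1 => qStirB n k + qb (2*(k+1)+1) * qStirB n (k+1)

/-- [2k]!! = [2k][2k-2]⋯[2]. -/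
noncomputable def qdf : ℕ → Polynomial ℤ
  | 0 => 1
  | k+1 => qb (2*(k+1)) * qdf k

/-- The complement map on ⟨n⟩: i ↦ n+1-i for i > 0, -i ↦ -(n+1-i), 0 ↦ 0. -/
def complB (n : ℕ) (x : ℤ) : ℤ :=
  if 0 < x then (n : ℤ) + 1 - x else if x < 0 then -((n : ℤ) + 1) - x else 0

/-- Complement of a partition, blockwise. -/
def complP (n : ℕ) {m : ℕ} (S : Fin m → Finset ℤ) : Fin m → Finset ℤ :=
  fun j => (S j).image (complB n)

/-- The index of the block paired with block i: 0 ↦ 0, 2ℓ-1 ↦ 2ℓ, 2ℓ ↦ 2ℓ-1. -/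
def pairIdx (k : ℕ) (i : Fin (2*k+1)) : Fin (2*k+1) :=
  if i.val = 0 then i
  else if h2 : i.val % 2 = 1 then ⟨i.val + 1, by omega⟩ else ⟨i.val - 1, by omega⟩

/-!
Swapping the blocks `S_{2ℓ-1}` and `S_{2ℓ}` of an ordered type B partition is an involution
that preserves the minima `m_j`, since `S_{2ℓ} = -S_{2ℓ-1}`. For the swapped partition `T`,
`lob_{B'}(T) = 0` says exactly that every positive element of a later block exceeds `m_j`.
If `S` is standard this holds because later blocks have larger minima, while a later
element equal to `m_{2ℓ-1} = m_{2ℓ}` can only sit in `T_{2ℓ} = S_{2ℓ-1}`, which does not contain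
`m_{2ℓ} ∈ S_{2ℓ}`. Conversely, `lob_{B'}(T) = 0` forces the element of absolute value `m_{2ℓ}`
in `T_{2ℓ}` to be negative, so `m_{2ℓ} ∈ T_{2ℓ-1}`, and applied to `m_{2ℓ+2} ∈ T_{2ℓ+1}` it
gives `m_{2ℓ} < m_{2ℓ+2}`.
-/

section BlockMinimum

variable {m : ℕ} {S : Fin m → Finset ℤ} {j : Fin m}

lemma mB_eq_min' (h : (S j).Nonempty) :
    mB S j = ((S j).image (fun x => |x|)).min' (h.image _) := by
  rw [mB, ← Finset.coe_min' (h.image _)]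
  rfl

lemma mB_le_abs {x : ℤ} (hx : x ∈ S j) : mB S j ≤ |x| := by
  rw [mB_eq_min' ⟨x, hx⟩]
  exact Finset.min'_le _ _ (Finset.mem_image_of_mem _ hx)

lemma exists_mem_abs_eq_mB (h : (S j).Nonempty) : ∃ x ∈ S j, |x| = mB S j := by
  rw [mB_eq_min' h]
  exact Finset.mem_image.mp (Finset.min'_mem _ _)

lemma lobB'_eq_zero_iff (S : Fin m → Finset ℤ) :
    lobB' S = 0 ↔ ∀ j i, j < i → ∀ s ∈ S i, 0 < s → mB S j < s := by
  have hfin : {p : ℤ × Fin m |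
      (∃ i, p.2 < i ∧ p.1 ∈ S i) ∧ 0 < p.1 ∧ p.1 ≤ mB S p.2}.Finite := by
    refine (Finset.univ.biUnion S ×ˢ (Finset.univ : Finset (Fin m))).finite_toSet.subset ?_
    rintro ⟨s, j⟩ ⟨⟨i, -, hs⟩, -⟩
    simpa using ⟨i, hs⟩
  rw [lobB', Set.ncard_eq_zero hfin, Set.eq_empty_iff_forall_notMem]
  constructor
  · intro h j i hji s hs hpos
    by_contra hle
    exact h (s, j) ⟨⟨i, hji, hs⟩, hpos, not_lt.mp hle⟩
  · rintro h ⟨s, j⟩ ⟨⟨i, hji, hs⟩, hpos, hle⟩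
    exact (h j i hji s hs hpos).not_ge hle

end BlockMinimum

section PairIdx

variable {k : ℕ}

lemma pairIdx_val (i : Fin (2*k+1)) : (pairIdx k i).val =
    if i.val = 0 then 0 else if i.val % 2 = 1 then i.val + 1 else i.val - 1 := by
  unfold pairIdx
  split_ifs <;> simp_all

lemma pairIdx_involutive : Function.Involutive (pairIdx k) := fun i =>
  Fin.ext (by grind [pairIdx_val])

lemma pairIdx_two_mul {i : ℕ} (hi : 1 ≤ i) (h : 2*i < 2*k+1) :
    pairIdx k ⟨2*i, h⟩ = ⟨2*i-1, by omega⟩ := by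
  apply Fin.ext
  simp only [pairIdx_val]
  split_ifs <;> omega

lemma pairIdx_two_mul_sub_one {i : ℕ} (hi : 1 ≤ i) (h : 2*i < 2*k+1) :
    pairIdx k ⟨2*i-1, by omega⟩ = ⟨2*i, h⟩ := by
  rw [← pairIdx_two_mul hi h, pairIdx_involutive]

lemma pairIdx_add_one_div_two (i : Fin (2*k+1)) :
    ((pairIdx k i).val + 1) / 2 = (i.val + 1) / 2 := by
  grind [pairIdx_val]

end PairIdx

namespace IsOrderedB

variable {n k : ℕ} {S : Fin (2*k+1) → Finset ℤ}

lemma mB_zero (hS : IsOrderedB n k S) : mB S 0 = 0 := by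
  obtain ⟨hne, -, -, h0, -⟩ := hS
  obtain ⟨x, -, hx⟩ := exists_mem_abs_eq_mB (hne 0)
  have := mB_le_abs h0
  rw [abs_zero] at this
  linarith [abs_nonneg x]

lemma mB_pos (hS : IsOrderedB n k S) {j : Fin (2*k+1)} (hj : j ≠ 0) : 0 < mB S j := by
  obtain ⟨hne, hdisj, -, h0, -⟩ := hS
  obtain ⟨x, hx, hxm⟩ := exists_mem_abs_eq_mB (hne j)
  rw [← hxm]
  have hx0 : x ≠ 0 := by
    rintro rfl
    exact Finset.disjoint_left.mp (hdisj j 0 hj) hx h0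
  exact abs_pos.mpr hx0

lemma mB_two_mul_sub_one (hS : IsOrderedB n k S) {i : ℕ} (hi : 1 ≤ i) (h : 2*i < 2*k+1) :
    mB S ⟨2*i-1, by omega⟩ = mB S ⟨2*i, h⟩ := by
  obtain ⟨-, -, -, -, -, hpair⟩ := hS
  simp only [mB, hpair i hi h, Finset.image_image, Function.comp_def, abs_neg]

lemma mB_eq_mB_two_mul_half (hS : IsOrderedB n k S) (j : Fin (2*k+1)) :
    mB S j = mB S ⟨2 * ((j.val + 1) / 2), by have := j.isLt; omega⟩ := by
  rcases Nat.even_or_odd j.val with ⟨a, ha⟩ | ⟨a, ha⟩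
  · exact congrArg (mB S) (Fin.ext (by simp only; omega))
  · convert hS.mB_two_mul_sub_one (i := a + 1) (by omega) (by omega) using 2 <;>
      ext <;> simp only <;> omega

lemma mB_pairIdx (hS : IsOrderedB n k S) (j : Fin (2*k+1)) : mB S (pairIdx k j) = mB S j := by
  rw [mB_eq_mB_two_mul_half hS, mB_eq_mB_two_mul_half hS j]
  simp only [pairIdx_add_one_div_two]

lemma comp_pairIdx (hS : IsOrderedB n k S) : IsOrderedB n k (fun t => S (pairIdx k t)) := by
  obtain ⟨hne, hdisj, hcover, h0, hneg, hpair⟩ := hS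
  refine ⟨fun i => hne _, ?_, ?_, h0, hneg, ?_⟩
  · exact fun i j hij => hdisj _ _ (pairIdx_involutive.injective.ne hij)
  · rw [← hcover]
    ext x
    simp only [Finset.mem_biUnion, Finset.mem_univ, true_and]
    exact (pairIdx_involutive.surjective.exists (p := fun i => x ∈ S i)).symm
  · intro i hi h
    dsimp only
    rw [pairIdx_two_mul hi h, pairIdx_two_mul_sub_one hi h, hpair i hi h, Finset.image_image]
    simp

lemma mB_two_mul_mem (hS : IsOrderedB n k S) (hlob : lobB' S = 0) {i : ℕ} (hi : 1 ≤ i)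
    (h : 2*i < 2*k+1) : mB S ⟨2*i, h⟩ ∈ S ⟨2*i-1, by omega⟩ := by
  obtain ⟨x, hx, hxm⟩ := exists_mem_abs_eq_mB (hS.1 ⟨2*i, h⟩)
  have hpos := hS.mB_pos (j := ⟨2*i, h⟩) (fun h0 => by simp [Fin.ext_iff] at h0; omega)
  rcases abs_cases x with ⟨hax, hx0⟩ | ⟨hax, -⟩
  · -- a positive `x` in the later block `S_{2i}` would not exceed `m_{2i-1} = m_{2i} = x`
    have := (lobB'_eq_zero_iff S).mp hlob ⟨2*i-1, by omega⟩ ⟨2*i, h⟩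
      (Fin.mk_lt_mk.mpr (by omega)) x hx (by omega)
    rw [hS.mB_two_mul_sub_one hi h] at this
    omega
  · rw [hS.2.2.2.2.2 i hi h] at hx
    obtain ⟨y, hy, rfl⟩ := Finset.mem_image.mp hx
    rwa [← hxm, hax, neg_neg]

lemma isStandardB_comp_pairIdx (hS : IsOrderedB n k S) (hlob : lobB' S = 0) :
    IsStandardB n k (fun t => S (pairIdx k t)) := by
  have hmB (j) : mB (fun t => S (pairIdx k t)) j = mB S j := hS.mB_pairIdx j
  refine ⟨hS.comp_pairIdx, fun i hi h => ?_, fun i h => ?_⟩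
  · dsimp only
    rw [hmB, pairIdx_two_mul hi h]
    exact hS.mB_two_mul_mem hlob hi h
  · rw [hmB, hmB]
    exact (lobB'_eq_zero_iff S).mp hlob ⟨2*i, by omega⟩ ⟨2*(i+1)-1, by omega⟩
      (Fin.mk_lt_mk.mpr (by omega)) _ (hS.mB_two_mul_mem hlob (by omega) h)
      (hS.mB_pos (fun h0 => by simp [Fin.ext_iff] at h0))

end IsOrderedB

namespace IsStandardB

variable {n k : ℕ} {S : Fin (2*k+1) → Finset ℤ}

lemma strictMono_mB_two_mul (hS : IsStandardB n k S) :
    StrictMono fun a : Fin (k+1) => mB S ⟨2 * a, by omega⟩ :=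
  Fin.strictMono_iff_lt_succ.mpr fun a => hS.2.2 a (by omega)

lemma lobB'_comp_pairIdx (hS : IsStandardB n k S) : lobB' (fun t => S (pairIdx k t)) = 0 := by
  have hmono := hS.strictMono_mB_two_mul
  obtain ⟨hord, hmem, -⟩ := hS
  refine (lobB'_eq_zero_iff _).mpr fun j i hji s hs hpos => ?_
  change mB S (pairIdx k j) < s
  by_contra! hle
  have hsi : mB S i ≤ s := by
    simpa [hord.mB_pairIdx, abs_of_pos hpos] using mB_le_abs hs
  rw [hord.mB_pairIdx, hord.mB_eq_mB_two_mul_half] at hle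
  rw [hord.mB_eq_mB_two_mul_half] at hsi
  have hji' : j.val < i.val := hji
  rcases Nat.lt_or_ge ((j.val + 1) / 2) ((i.val + 1) / 2) with hlt | hge
  · have := hmono (a := ⟨(j.val + 1) / 2, by omega⟩)
      (b := ⟨(i.val + 1) / 2, by omega⟩) hlt
    simp only at this
    omega
  · -- `j = 2b-1` and `i = 2b`: then `s = m_{2b}` lies in both `S_{2b}` and `S_{2b-1}`
    set b := (i.val + 1) / 2 with hb
    have hb1 : 1 ≤ b := by omega
    have hbk : 2*b < 2*k+1 := by omega
    have hi : i = ⟨2*b, hbk⟩ := Fin.ext (by simp only; omega)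
    have hj : (⟨2 * ((j.val + 1) / 2), by omega⟩ : Fin (2*k+1)) = ⟨2*b, hbk⟩ :=
      Fin.ext (by simp only; omega)
    have hs_eq : s = mB S ⟨2*b, hbk⟩ := le_antisymm (hj ▸ hle) hsi
    rw [hi, pairIdx_two_mul hb1 hbk] at hs
    refine Finset.disjoint_left.mp (hord.2.1 ⟨2*b, hbk⟩ ⟨2*b-1, by omega⟩
      (fun h0 => by simp [Fin.ext_iff] at h0; omega)) ?_ hs
    exact hs_eq ▸ hmem b hb1 hbk

end IsStandardB

/-- swapping blocks S_{2ℓ} and S_{2ℓ-1} is a bijection from standard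
type B partitions onto ordered type B partitions with lob_{B'} = 0. -/
theorem stmt7 (n k : ℕ) :
    Set.BijOn (fun (S : Fin (2*k+1) → Finset ℤ) => fun t => S (pairIdx k t))
      {S | IsStandardB n k S}
      {S | IsOrderedB n k S ∧ lobB' S = 0} := by
  have hinv : Function.Involutive fun (S : Fin (2*k+1) → Finset ℤ) => fun t => S (pairIdx k t) :=
    fun S => funext fun t => congrArg S (pairIdx_involutive t)
  refine Set.InvOn.bijOn (f' := fun S t => S (pairIdx k t))
    ⟨fun S _ => hinv S, fun S _ => hinv S⟩ ?_ ?_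
  · exact fun S hS => ⟨hS.1.comp_pairIdx, hS.lobB'_comp_pairIdx⟩
  · exact fun S hS => hS.1.isStandardB_comp_pairIdx hS.2
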